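/- Greedy increment bound (Lemma 2(ii)): Let f be normalized, monotone, submodular with curvature c on finite item set N with sizes s(i) > 0 and capacity γ. Let i₁,…,i_{k+1} be the greedy order (i_j maximizes marginal density (f(G_{j-1}∪{i}) - f(G_{j-1}))/s(i) over remaining items of size ≤ γ), G_j = {i₁,…,i_j}, δ_j = f(G_j) - f(G_{j-1}), and let Opt be a feasible optimal set (s(Opt) ≤ γ). Assume G_k ≠ Opt. Then for all j ∈ {1,…,k+1}: δ_j ≥ (s_j / (γ - (1-c)·s(G_{j-1}))) · (f(Opt) - ∑_{m=1}^{j-1} δ_m). -/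

import Mathlib

open Finset

/-!
Let `S = G (j - 1)` and let `θ` be the density `δ_j / s (i j)` of the `j`-th greedy step.
Adding the elements of `Opt \ S` to `S` one at a time gains at most `θ · s x` per element by the
greedy choice and submodularity, so `f (Opt ∪ S) ≤ f S + θ · s (Opt \ S)`. Adding the elements
`x` of `S \ Opt` to `Opt` gains at least `f N - f (N \ {x}) ≥ (1 - c) f {x}` each, and
`f {x} ≥ θ · s x` because greedy densities decrease. Comparing the two bounds and using
`s Opt ≤ γ` gives `f Opt - f S ≤ θ (γ - (1 - c) s S)`.
-/

section

variable {ι : Type*} [DecidableEq ι]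

def SubmodularOn (N : Finset ι) (f : Finset ι → ℝ) : Prop :=
  ∀ A B : Finset ι, A ⊆ N → B ⊆ N → f A + f B ≥ f (A ∪ B) + f (A ∩ B)

namespace SubmodularOn

variable {N : Finset ι} {f : Finset ι → ℝ}

theorem marginal_le_marginal_of_subset (hf : SubmodularOn N f) {A B : Finset ι} {x : ι}
    (hAB : A ⊆ B) (hBN : B ⊆ N) (hxN : x ∈ N) (hxB : x ∉ B) :
    f (insert x B) - f B ≤ f (insert x A) - f A := by
  have h := hf (insert x A) B (insert_subset hxN (hAB.trans hBN)) hBN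
  rw [insert_union, union_eq_right.mpr hAB, insert_inter_of_notMem hxB,
    inter_eq_left.mpr hAB] at h
  linarith

theorem le_add_sum_marginal (hf : SubmodularOn N f) {A S : Finset ι} (hAN : A ⊆ N)
    (hSN : S ⊆ N) (hSA : Disjoint S A) :
    f (A ∪ S) ≤ f A + ∑ x ∈ S, (f (insert x A) - f A) := by
  induction S using Finset.induction_on with
  | empty => simp
  | @insert a S haS ih =>
    have hS : S ⊆ N := (subset_insert a S).trans hSN
    have haA : a ∉ A := disjoint_left.mp hSA (mem_insert_self a S)
    have hstep := hf.marginal_le_marginal_of_subset subset_union_left (union_subset hAN hS)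
      (hSN (mem_insert_self a S)) (by simp [haA, haS])
    rw [union_insert, sum_insert haS]
    linarith [ih hS (hSA.mono_left (subset_insert a S))]

theorem add_sum_marginal_top_le (hf : SubmodularOn N f) {A S : Finset ι} (hAN : A ⊆ N)
    (hSN : S ⊆ N) (hSA : Disjoint S A) :
    f A + ∑ x ∈ S, (f N - f (N.erase x)) ≤ f (A ∪ S) := by
  induction S using Finset.induction_on with
  | empty => simp
  | @insert a S haS ih =>
    have hS : S ⊆ N := (subset_insert a S).trans hSN
    have haN : a ∈ N := hSN (mem_insert_self a S)
    have haAS : a ∉ A ∪ S := by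
      simp [haS, disjoint_left.mp hSA (mem_insert_self a S)]
    have hstep := hf.marginal_le_marginal_of_subset
      (subset_erase.mpr ⟨union_subset hAN hS, haAS⟩) (erase_subset a N) haN (notMem_erase a N)
    rw [insert_erase haN] at hstep
    rw [union_insert, sum_insert haS]
    linarith [ih hS (hSA.mono_left (subset_insert a S))]

theorem sub_le_mul_budget (hf : SubmodularOn N f) {S T : Finset ι} {s : ι → ℝ} {γ c θ : ℝ}
    (hSN : S ⊆ N) (hTN : T ⊆ N) (hs : ∀ x ∈ N, 0 ≤ s x) (hc : 0 ≤ c) (hθ : 0 ≤ θ)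
    (hT : ∑ x ∈ T, s x ≤ γ)
    (hgain : ∀ x ∈ T \ S, f (insert x S) - f S ≤ θ * s x)
    (hloss : ∀ x ∈ S \ T, (1 - c) * (θ * s x) ≤ f N - f (N.erase x)) :
    f T - f S ≤ θ * (γ - (1 - c) * ∑ x ∈ S, s x) := by
  have hupper : f (S ∪ T) ≤ f S + θ * ∑ x ∈ T \ S, s x := by
    rw [← union_sdiff_self_eq_union, mul_sum]
    refine (hf.le_add_sum_marginal hSN (sdiff_subset.trans hTN) sdiff_disjoint).trans ?_
    gcongr with x hx
    exact hgain x hx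
  have hlower : f T + (1 - c) * (θ * ∑ x ∈ S \ T, s x) ≤ f (S ∪ T) := by
    rw [union_comm, ← union_sdiff_self_eq_union, mul_sum, mul_sum]
    refine le_trans ?_ (hf.add_sum_marginal_top_le hTN (sdiff_subset.trans hSN) sdiff_disjoint)
    gcongr with x hx
    exact hloss x hx
  have hinter : 0 ≤ ∑ x ∈ T ∩ S, s x := sum_nonneg fun x hx => hs x (hTN (mem_inter.mp hx).1)
  rw [← sum_inter_add_sum_sdiff T S s] at hT
  rw [← sum_inter_add_sum_sdiff S T s, inter_comm]
  nlinarith [mul_nonneg hθ (sub_nonneg.mpr hT), mul_nonneg (mul_nonneg hθ hc) hinter]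

end SubmodularOn

theorem one_sub_curvature_mul_le {N : Finset ι} (hN : N.Nonempty) {f : Finset ι → ℝ} {c : ℝ}
    (hc : c = 1 - N.inf' hN (fun x => (f N - f (N.erase x)) / f {x})) {x : ι} (hx : x ∈ N)
    (hfx : 0 < f {x}) :
    (1 - c) * f {x} ≤ f N - f (N.erase x) := by
  rw [hc, sub_sub_cancel, ← le_div_iff₀ hfx]
  exact inf'_le _ hx

theorem sum_Icc_one_sub_pred (u : ℕ → ℝ) (t : ℕ) :
    ∑ m ∈ Icc 1 t, (u m - u (m - 1)) = u t - u 0 := by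
  induction t with
  | zero => simp
  | succ n ih => rw [sum_Icc_succ_top (by omega), ih]; simp

theorem div_mul_le_mul_of_le_mul {a g θ D : ℝ} (ha : 0 ≤ a) (hθ : 0 ≤ θ) (hD : 0 ≤ D)
    (hg : g ≤ θ * D) : a / D * g ≤ a * θ := by
  rcases hD.eq_or_lt with rfl | hD
  · simpa using mul_nonneg ha hθ
  · calc a / D * g ≤ a / D * (θ * D) := by gcongr
      _ = a * θ := by field_simp

structure IsGreedySeq (N : Finset ι) (s : ι → ℝ) (f : Finset ι → ℝ) (γ : ℝ) (k : ℕ)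
    (i : ℕ → ι) (G : ℕ → Finset ι) : Prop where
  zero : G 0 = ∅
  succ : ∀ j : ℕ, G (j + 1) = insert (i (j + 1)) (G j)
  mem : ∀ j : ℕ, 1 ≤ j → j ≤ k + 1 → i j ∈ N \ G (j - 1)
  fit : ∀ j : ℕ, 1 ≤ j → j ≤ k + 1 → s (i j) ≤ γ
  greedy : ∀ j : ℕ, 1 ≤ j → j ≤ k + 1 → ∀ x ∈ N \ G (j - 1), s x ≤ γ →
    (f (insert x (G (j - 1))) - f (G (j - 1))) / s x ≤
    (f (insert (i j) (G (j - 1))) - f (G (j - 1))) / s (i j)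

noncomputable def stepDensity (f : Finset ι → ℝ) (s : ι → ℝ) (i : ℕ → ι) (G : ℕ → Finset ι)
    (j : ℕ) : ℝ :=
  (f (G j) - f (G (j - 1))) / s (i j)

namespace IsGreedySeq

variable {N : Finset ι} {s : ι → ℝ} {f : Finset ι → ℝ} {γ : ℝ} {k : ℕ} {i : ℕ → ι}
  {G : ℕ → Finset ι}

theorem eq_image_Icc (hg : IsGreedySeq N s f γ k i G) (t : ℕ) : G t = (Icc 1 t).image i := by
  induction t with
  | zero => simp [hg.zero]
  | succ n ih => rw [hg.succ, ih, ← image_insert, insert_Icc_right_eq_Icc_add_one (by omega)]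

theorem subset_of_le (hg : IsGreedySeq N s f γ k i G) {a b : ℕ} (hab : a ≤ b) : G a ⊆ G b := by
  rw [hg.eq_image_Icc, hg.eq_image_Icc]
  exact image_subset_image (Icc_subset_Icc_right hab)

theorem subset (hg : IsGreedySeq N s f γ k i G) {t : ℕ} (ht : t ≤ k + 1) : G t ⊆ N := by
  rw [hg.eq_image_Icc, image_subset_iff]
  intro m hm
  rw [mem_Icc] at hm
  exact (mem_sdiff.mp (hg.mem m hm.1 (hm.2.trans ht))).1

theorem eq_insert (hg : IsGreedySeq N s f γ k i G) {t : ℕ} (ht : 1 ≤ t) :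
    G t = insert (i t) (G (t - 1)) := by
  obtain ⟨n, rfl⟩ := Nat.exists_eq_add_of_le' ht
  exact hg.succ n

theorem marginal_le_stepDensity_mul (hg : IsGreedySeq N s f γ k i G)
    (hs : ∀ x ∈ N, 0 < s x) {j : ℕ} (hj1 : 1 ≤ j) (hj2 : j ≤ k + 1) {x : ι}
    (hx : x ∈ N \ G (j - 1)) (hxγ : s x ≤ γ) :
    f (insert x (G (j - 1))) - f (G (j - 1)) ≤ stepDensity f s i G j * s x := by
  have h := hg.greedy j hj1 hj2 x hx hxγ
  rw [← hg.eq_insert hj1, div_le_iff₀ (hs x (mem_sdiff.mp hx).1)] at h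
  exact h

theorem stepDensity_succ_le (hg : IsGreedySeq N s f γ k i G) (hf : SubmodularOn N f)
    (hs : ∀ x ∈ N, 0 < s x) {n : ℕ} (hn1 : 1 ≤ n) (hn2 : n + 1 ≤ k + 1) :
    stepDensity f s i G (n + 1) ≤ stepDensity f s i G n := by
  obtain ⟨hiN, hiG⟩ := mem_sdiff.mp (hg.mem (n + 1) (by omega) hn2)
  rw [Nat.add_sub_cancel] at hiG
  have hiG' : i (n + 1) ∉ G (n - 1) := fun h => hiG (hg.subset_of_le (by omega) h)
  have hdim := hf.marginal_le_marginal_of_subset (hg.subset_of_le (Nat.sub_le n 1))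
    (hg.subset (by omega)) hiN hiG
  have hgain := hg.marginal_le_stepDensity_mul hs hn1 (by omega) (mem_sdiff.mpr ⟨hiN, hiG'⟩)
    (hg.fit (n + 1) (by omega) hn2)
  rw [← hg.succ] at hdim
  rw [stepDensity, Nat.add_sub_cancel, div_le_iff₀ (hs _ hiN)]
  exact hdim.trans hgain

theorem stepDensity_le_of_le (hg : IsGreedySeq N s f γ k i G) (hf : SubmodularOn N f)
    (hs : ∀ x ∈ N, 0 < s x) {a b : ℕ} (ha : 1 ≤ a) (hab : a ≤ b) (hb : b ≤ k + 1) :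
    stepDensity f s i G b ≤ stepDensity f s i G a := by
  induction b, hab using Nat.le_induction with
  | base => exact le_rfl
  | succ n hn ih =>
    exact (hg.stepDensity_succ_le hf hs (ha.trans hn) hb).trans (ih (by omega))

theorem stepDensity_nonneg (hg : IsGreedySeq N s f γ k i G)
    (hmono : ∀ A B : Finset ι, A ⊆ B → B ⊆ N → f A ≤ f B) (hs : ∀ x ∈ N, 0 < s x) {j : ℕ}
    (hj1 : 1 ≤ j) (hj2 : j ≤ k + 1) : 0 ≤ stepDensity f s i G j := by
  have hiN := (mem_sdiff.mp (hg.mem j hj1 hj2)).1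
  exact div_nonneg (sub_nonneg.mpr (hmono _ _ (hg.subset_of_le (Nat.sub_le j 1))
    (hg.subset hj2))) (hs _ hiN).le

theorem stepDensity_mul_le_singleton (hg : IsGreedySeq N s f γ k i G) (hf : SubmodularOn N f)
    (hs : ∀ x ∈ N, 0 < s x) (hnorm : f ∅ = 0) {m j : ℕ} (hm : 1 ≤ m) (hmj : m ≤ j)
    (hj : j ≤ k + 1) :
    stepDensity f s i G j * s (i m) ≤ f {i m} := by
  obtain ⟨hiN, hiG⟩ := mem_sdiff.mp (hg.mem m hm (hmj.trans hj))
  have hsingle := hf.marginal_le_marginal_of_subset (empty_subset _) (hg.subset (by omega))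
    hiN hiG
  rw [← hg.eq_insert hm, insert_empty, hnorm, sub_zero] at hsingle
  have hdens : stepDensity f s i G j ≤ (f (G m) - f (G (m - 1))) / s (i m) :=
    hg.stepDensity_le_of_le hf hs hm hmj hj
  rw [le_div_iff₀ (hs _ hiN)] at hdens
  exact hdens.trans hsingle

theorem sum_le_sum_of_le (hg : IsGreedySeq N s f γ k i G) (hs : ∀ x ∈ N, 0 < s x) {a b : ℕ}
    (hab : a ≤ b) (hb : b ≤ k + 1) : ∑ x ∈ G a, s x ≤ ∑ x ∈ G b, s x :=
  sum_le_sum_of_subset_of_nonneg (hg.subset_of_le hab) fun x hx _ => (hs x (hg.subset hb hx)).le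

theorem sum_Icc_marginal (hg : IsGreedySeq N s f γ k i G) (hnorm : f ∅ = 0) (t : ℕ) :
    ∑ m ∈ Icc 1 t, (f (G m) - f (G (m - 1))) = f (G t) := by
  rw [sum_Icc_one_sub_pred (fun m => f (G m)), hg.zero, hnorm, sub_zero]

end IsGreedySeq

end

theorem greedy_increment_bound_ii_general {ι : Type*} [DecidableEq ι]
    (N : Finset ι) (hN : N.Nonempty) (s : ι → ℝ) (f : Finset ι → ℝ)
    (γ c : ℝ) (k : ℕ) (i : ℕ → ι) (G : ℕ → Finset ι) (Opt : Finset ι)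
    (hc0 : 0 ≤ c) (hc1 : c ≤ 1)
    (hspos : ∀ x ∈ N, 0 < s x)
    (hnorm : f ∅ = 0)
    (hmono : ∀ A B : Finset ι, A ⊆ B → B ⊆ N → f A ≤ f B)
    (hsub : ∀ A B : Finset ι, A ⊆ N → B ⊆ N → f A + f B ≥ f (A ∪ B) + f (A ∩ B))
    (hfpos : ∀ x ∈ N, 0 < f {x})
    (hc : c = 1 - N.inf' hN (fun x => (f N - f (N.erase x)) / f {x}))
    (hG0 : G 0 = ∅)
    (hGsucc : ∀ j : ℕ, G (j + 1) = insert (i (j + 1)) (G j))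
    (hmem : ∀ j : ℕ, 1 ≤ j → j ≤ k + 1 → i j ∈ N \ G (j - 1))
    (hfit : ∀ j : ℕ, 1 ≤ j → j ≤ k + 1 → s (i j) ≤ γ)
    (hGkfit : ∑ x ∈ G k, s x ≤ γ)
    (hgreedy : ∀ j : ℕ, 1 ≤ j → j ≤ k + 1 → ∀ x ∈ N \ G (j - 1), s x ≤ γ →
      (f (insert x (G (j - 1))) - f (G (j - 1))) / s x ≤
      (f (insert (i j) (G (j - 1))) - f (G (j - 1))) / s (i j))
    (hOptsub : Opt ⊆ N) (hOptfeas : ∑ x ∈ Opt, s x ≤ γ) :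
    ∀ j : ℕ, 1 ≤ j → j ≤ k + 1 →
      f (G j) - f (G (j - 1)) ≥
        s (i j) / (γ - (1 - c) * ∑ x ∈ G (j - 1), s x) *
          (f Opt - ∑ m ∈ Finset.Icc 1 (j - 1), (f (G m) - f (G (m - 1)))) := by
  have hg : IsGreedySeq N s f γ k i G := ⟨hG0, hGsucc, hmem, hfit, hgreedy⟩
  have hf : SubmodularOn N f := hsub
  intro j hj1 hj2
  have hGN : G (j - 1) ⊆ N := hg.subset (by omega)
  have hsj : 0 < s (i j) := hspos _ (mem_sdiff.mp (hmem j hj1 hj2)).1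
  have hθ := hg.stepDensity_nonneg hmono hspos hj1 hj2
  have hgap : f Opt - f (G (j - 1)) ≤
      stepDensity f s i G j * (γ - (1 - c) * ∑ x ∈ G (j - 1), s x) := by
    refine hf.sub_le_mul_budget hGN hOptsub (fun x hx => (hspos x hx).le) hc0 hθ hOptfeas
      (fun x hx => ?_) (fun x hx => ?_)
    · obtain ⟨hxO, hxG⟩ := mem_sdiff.mp hx
      exact hg.marginal_le_stepDensity_mul hspos hj1 hj2 (mem_sdiff.mpr ⟨hOptsub hxO, hxG⟩)
        ((single_le_sum (fun y hy => (hspos y (hOptsub hy)).le) hxO).trans hOptfeas)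
    · obtain ⟨m, hm, rfl⟩ := mem_image.mp (hg.eq_image_Icc (j - 1) ▸ (mem_sdiff.mp hx).1)
      have hiN := hGN (mem_sdiff.mp hx).1
      calc (1 - c) * (stepDensity f s i G j * s (i m)) ≤ (1 - c) * f {i m} :=
            mul_le_mul_of_nonneg_left (hg.stepDensity_mul_le_singleton hf hspos hnorm
              (mem_Icc.mp hm).1 (by grind) hj2) (sub_nonneg.mpr hc1)
        _ ≤ f N - f (N.erase (i m)) := one_sub_curvature_mul_le hN hc hiN (hfpos _ hiN)
  have hslack : 0 ≤ γ - (1 - c) * ∑ x ∈ G (j - 1), s x := by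
    have hsG : 0 ≤ ∑ x ∈ G (j - 1), s x := sum_nonneg fun x hx => (hspos x (hGN hx)).le
    have hGfit := (hg.sum_le_sum_of_le hspos (by omega : j - 1 ≤ k) (by omega)).trans hGkfit
    nlinarith
  rw [hg.sum_Icc_marginal hnorm, ← mul_div_cancel₀ (f (G j) - f (G (j - 1))) hsj.ne', ge_iff_le]
  exact div_mul_le_mul_of_le_mul hsj.le hθ hslack hgap

/-- Lemma 2(ii): greedy increment bound. -/
theorem greedy_increment_bound_ii {ι : Type*} [DecidableEq ι]
    (N : Finset ι) (hN : N.Nonempty) (s : ι → ℝ) (f : Finset ι → ℝ)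
    (γ c : ℝ) (k : ℕ) (i : ℕ → ι) (G : ℕ → Finset ι) (Opt : Finset ι)
    (hγ : 0 < γ) (hc0 : 0 ≤ c) (hc1 : c ≤ 1)
    (hspos : ∀ x ∈ N, 0 < s x)
    (hnorm : f ∅ = 0)
    (hmono : ∀ A B : Finset ι, A ⊆ B → B ⊆ N → f A ≤ f B)
    (hsub : ∀ A B : Finset ι, A ⊆ N → B ⊆ N → f A + f B ≥ f (A ∪ B) + f (A ∩ B))
    (hfpos : ∀ x ∈ N, 0 < f {x})
    (hc : c = 1 - N.inf' hN (fun x => (f N - f (N.erase x)) / f {x}))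
    (hG0 : G 0 = ∅)
    (hGsucc : ∀ j : ℕ, G (j + 1) = insert (i (j + 1)) (G j))
    (hmem : ∀ j : ℕ, 1 ≤ j → j ≤ k + 1 → i j ∈ N \ G (j - 1))
    (hfit : ∀ j : ℕ, 1 ≤ j → j ≤ k + 1 → s (i j) ≤ γ)
    (hGkfit : ∑ x ∈ G k, s x ≤ γ)
    (hgreedy : ∀ j : ℕ, 1 ≤ j → j ≤ k + 1 → ∀ x ∈ N \ G (j - 1), s x ≤ γ →
      (f (insert x (G (j - 1))) - f (G (j - 1))) / s x ≤
      (f (insert (i j) (G (j - 1))) - f (G (j - 1))) / s (i j))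
    (hOptsub : Opt ⊆ N) (hOptfeas : ∑ x ∈ Opt, s x ≤ γ)
    (hOptopt : ∀ B : Finset ι, B ⊆ N → ∑ x ∈ B, s x ≤ γ → f B ≤ f Opt)
    (hne : G k ≠ Opt) :
    ∀ j : ℕ, 1 ≤ j → j ≤ k + 1 →
      f (G j) - f (G (j - 1)) ≥
        s (i j) / (γ - (1 - c) * ∑ x ∈ G (j - 1), s x) *
          (f Opt - ∑ m ∈ Finset.Icc 1 (j - 1), (f (G m) - f (G (m - 1)))) :=
  greedy_increment_bound_ii_general N hN s f γ c k i G Opt hc0 hc1 hspos hnorm hmono hsub hfpos hc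
    hG0 hGsucc hmem hfit hGkfit hgreedy hOptsub hOptfeas
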